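/- Let $\lambda > 0$, $0 < \beta < 1$, and let $f \in W^{1,1}((t_j,t_{j+1}))$, $\upsilon \in \mathbb{R}$. Suppose $|E_{\beta,\beta}(-z)| \le C_E$ and $|E_{\beta,1}(-z)| \le C_E$ for all $z \ge 0$, and $\sup_{s}(s-t_j)^{\beta+\varepsilon}|f'(s)| =: M < \infty$ for some $\varepsilon \in (0,1-\beta)$. Then the solution $v$ of the constant-order fractional relaxation problem (given by the Mittag–Leffler representation) satisfies the pointwise derivative bound $|v'(t)| \le C_E\big( (|f(t_j)| + \lambda|\upsilon|)\,(t-t_j)^{\beta-1} + M\,\mathcal{B}(1-\beta-\varepsilon,\beta)\,(t-t_j)^{-\varepsilon} \big)$ for a.e. $t \in (t_j, t_{j+1})$; in particular $v' \in L^1((t_j,t_{j+1}))$. -/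

import Mathlib

open MeasureTheory Real intervalIntegral

/-- The two-parameter Mittag–Leffler function `E_{α,β}(z) = ∑ₖ zᵏ/Γ(αk+β)`. -/
noncomputable def mittagLeffler (α β z : ℝ) : ℝ :=
  ∑' k : ℕ, z ^ k / Real.Gamma (α * k + β)

/-- The Beta function `B(r₁,r₂) = ∫₀¹ s^{r₁-1} (1-s)^{r₂-1} ds`. -/
noncomputable def betaFn (r₁ r₂ : ℝ) : ℝ :=
  ∫ s in (0:ℝ)..1, s ^ (r₁ - 1) * (1 - s) ^ (r₂ - 1)

/-! Both terms of `v'` are controlled through the bound `C_E` on `E_{β,β}` along the negative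
half-line, which turns the kernel `x ^ (β - 1) * E_{β,β}(-λ x ^ β)` into `C_E x ^ (β - 1)`. The
weight hypothesis gives `|f' r| ≤ M (r - t_j) ^ (-(β + ε))`, so the convolution term is dominated
by a Beta integral, which the substitution `r = t_j + (s - t_j) u` evaluates as
`B(1 - β - ε, β) (s - t_j) ^ (-ε)`. Both exponents `β - 1` and `-ε` exceed `-1`, so the bound is
integrable, and `v'` is measurable because the convolution becomes an integral over a fixed interval
once the integrand is cut off at `r = s`. -/

open Set

@[fun_prop]
lemma measurable_mittagLeffler (α γ : ℝ) : Measurable (mittagLeffler α γ) :=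
  (StronglyMeasurable.tsum fun k : ℕ =>
    ((measurable_id.pow_const k).div_const _).stronglyMeasurable).measurable

noncomputable def mittagLefflerKernel (β lam x : ℝ) : ℝ :=
  x ^ (β - 1) * mittagLeffler β β (-lam * x ^ β)

@[fun_prop]
lemma measurable_mittagLefflerKernel (β lam : ℝ) : Measurable (mittagLefflerKernel β lam) := by
  unfold mittagLefflerKernel
  fun_prop

lemma abs_mittagLefflerKernel_le {β lam C x : ℝ}
    (hC : ∀ z : ℝ, 0 ≤ z → |mittagLeffler β β (-z)| ≤ C) (hlam : 0 ≤ lam) (hx : 0 ≤ x) :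
    |mittagLefflerKernel β lam x| ≤ C * x ^ (β - 1) := by
  have hxβ : 0 ≤ x ^ (β - 1) := rpow_nonneg hx _
  rw [mittagLefflerKernel, abs_mul, abs_of_nonneg hxβ, mul_comm, neg_mul]
  exact mul_le_mul_of_nonneg_right (hC _ (mul_nonneg hlam (rpow_nonneg hx _))) hxβ

lemma intervalIntegrable_sub_rpow {a b c p : ℝ} (hp : -1 < p) :
    IntervalIntegrable (fun r => (r - c) ^ p) volume a b := by
  simpa using (intervalIntegrable_rpow' hp (a := a - c) (b := b - c)).comp_sub_right c

lemma intervalIntegrable_rsub_rpow {a b c p : ℝ} (hp : -1 < p) :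
    IntervalIntegrable (fun r => (c - r) ^ p) volume a b := by
  simpa using (intervalIntegrable_rpow' hp (a := c - a) (b := c - b)).comp_sub_left c

lemma intervalIntegrable_sub_rpow_mul_sub_rpow {a b p q : ℝ} (hab : a < b) (hp : -1 < p)
    (hq : -1 < q) : IntervalIntegrable (fun r => (r - a) ^ p * (b - r) ^ q) volume a b := by
  have ham : a < (a + b) / 2 := by linarith
  have hmb : (a + b) / 2 < b := by linarith
  refine IntervalIntegrable.trans (b := (a + b) / 2) ?_ ?_
  · refine (intervalIntegrable_sub_rpow hp).mul_continuousOn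
      (ContinuousOn.rpow_const (by fun_prop) fun r hr => Or.inl ?_)
    rw [uIcc_of_le ham.le] at hr
    exact (sub_pos.2 (hr.2.trans_lt hmb)).ne'
  · refine (intervalIntegrable_rsub_rpow hq).continuousOn_mul
      (ContinuousOn.rpow_const (by fun_prop) fun r hr => Or.inl ?_)
    rw [uIcc_of_le hmb.le] at hr
    exact (sub_pos.2 (ham.trans_le hr.1)).ne'

lemma integral_sub_rpow_mul_sub_rpow {a b p q : ℝ} (hab : a < b) :
    ∫ r in a..b, (r - a) ^ (p - 1) * (b - r) ^ (q - 1) = (b - a) ^ (p + q - 1) * betaFn p q := by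
  have hc : 0 < b - a := sub_pos.2 hab
  have hsubst := smul_integral_comp_mul_add (a := 0) (b := 1)
    (fun r => (r - a) ^ (p - 1) * (b - r) ^ (q - 1)) (b - a) a
  simp only [mul_zero, zero_add, mul_one, sub_add_cancel, smul_eq_mul] at hsubst
  have hscale : ∀ u ∈ uIcc (0 : ℝ) 1,
      ((b - a) * u + a - a) ^ (p - 1) * (b - ((b - a) * u + a)) ^ (q - 1)
        = (b - a) ^ (p - 1) * (b - a) ^ (q - 1) * (u ^ (p - 1) * (1 - u) ^ (q - 1)) := by
    intro u hu
    rw [uIcc_of_le zero_le_one] at hu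
    rw [show (b - a) * u + a - a = (b - a) * u by ring,
      show b - ((b - a) * u + a) = (b - a) * (1 - u) by ring,
      mul_rpow hc.le hu.1, mul_rpow hc.le (sub_nonneg.2 hu.2)]
    ring
  have hpow : (b - a) * ((b - a) ^ (p - 1) * (b - a) ^ (q - 1)) = (b - a) ^ (p + q - 1) := by
    rw [← rpow_add hc, mul_comm, ← rpow_add_one hc.ne']
    ring_nf
  rw [← hsubst, integral_congr hscale, intervalIntegral.integral_const_mul, betaFn, ← mul_assoc,
    hpow]

lemma abs_integral_mul_le_betaFn {g h : ℝ → ℝ} {a s p q C M : ℝ} (has : a < s) (hp : 0 < p)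
    (hq : 0 < q) (hg : ∀ r ∈ Ioo a s, |g r| ≤ C * (s - r) ^ (q - 1))
    (hh : ∀ r ∈ Ioo a s, |h r| ≤ M * (r - a) ^ (p - 1)) :
    |∫ r in a..s, g r * h r| ≤ C * M * betaFn p q * (s - a) ^ (p + q - 1) := by
  have hbound : ∀ᵐ r, r ∈ Ioc a s →
      ‖g r * h r‖ ≤ C * M * ((r - a) ^ (p - 1) * (s - r) ^ (q - 1)) := by
    filter_upwards [Measure.ae_ne volume s] with r hrs hr
    have hr' : r ∈ Ioo a s := ⟨hr.1, lt_of_le_of_ne hr.2 hrs⟩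
    rw [Real.norm_eq_abs, abs_mul]
    calc |g r| * |h r| ≤ C * (s - r) ^ (q - 1) * (M * (r - a) ^ (p - 1)) :=
          mul_le_mul (hg r hr') (hh r hr') (abs_nonneg _) ((abs_nonneg _).trans (hg r hr'))
      _ = C * M * ((r - a) ^ (p - 1) * (s - r) ^ (q - 1)) := by ring
  have hint := (intervalIntegrable_sub_rpow_mul_sub_rpow has (p := p - 1) (q := q - 1)
    (by linarith) (by linarith)).const_mul (C * M)
  calc |∫ r in a..s, g r * h r|
      ≤ ∫ r in a..s, C * M * ((r - a) ^ (p - 1) * (s - r) ^ (q - 1)) :=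
        norm_integral_le_of_norm_le has.le hbound hint
    _ = C * M * betaFn p q * (s - a) ^ (p + q - 1) := by
        rw [intervalIntegral.integral_const_mul, integral_sub_rpow_mul_sub_rpow has]
        ring

lemma aestronglyMeasurable_intervalIntegral_comp_sub_mul {k φ : ℝ → ℝ} {a b : ℝ}
    (hk : Measurable k) (hφ : AEStronglyMeasurable φ (volume.restrict (Ioc a b))) :
    AEStronglyMeasurable (fun s => ∫ r in a..s, k (s - r) * φ r) (volume.restrict (Ioc a b)) := by
  -- cutting the integrand off at `r = s` makes the domain of integration independent of `s`
  let H : ℝ × ℝ → ℝ := fun x => (if x.2 ≤ x.1 then k (x.1 - x.2) else 0) * φ x.2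
  have hH : AEStronglyMeasurable H ((volume.restrict (Ioc a b)).prod (volume.restrict (Ioc a b))) :=
    ((Measurable.ite (measurableSet_le measurable_snd measurable_fst) (by fun_prop)
      measurable_const).aestronglyMeasurable).mul hφ.comp_snd
  refine hH.integral_prod_right'.congr ?_
  filter_upwards [ae_restrict_mem measurableSet_Ioc] with s hs
  have hslice : (fun r => H (s, r)) = (Iic s).indicator fun r => k (s - r) * φ r := by
    ext r
    by_cases hrs : r ≤ s <;> simp [H, hrs]
  rw [hslice, setIntegral_indicator measurableSet_Iic, Ioc_inter_Iic, min_eq_right hs.2,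
    integral_of_le hs.1.le]

lemma abs_mul_add_integral_le {K φ : ℝ → ℝ} {a s p q c A C M : ℝ} (has : a < s) (hp : 0 < p)
    (hq : 0 < q) (hc : |c| ≤ A) (hK : ∀ x ∈ Ioc 0 (s - a), |K x| ≤ C * x ^ (q - 1))
    (hφ : ∀ r ∈ Ioo a s, |φ r| ≤ M * (r - a) ^ (p - 1)) :
    |c * K (s - a) + ∫ r in a..s, K (s - r) * φ r|
      ≤ A * (C * (s - a) ^ (q - 1)) + C * M * betaFn p q * (s - a) ^ (p + q - 1) := by
  have hKs := hK (s - a) ⟨sub_pos.2 has, le_rfl⟩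
  have hconv := abs_integral_mul_le_betaFn (g := fun r => K (s - r)) has hp hq
    (fun r hr => hK (s - r) ⟨sub_pos.2 hr.2, by linarith [hr.1]⟩) hφ
  calc _ ≤ |c * K (s - a)| + |∫ r in a..s, K (s - r) * φ r| := abs_add_le _ _
    _ ≤ _ := by
      rw [abs_mul]
      exact add_le_add (mul_le_mul hc hKs (abs_nonneg _) ((abs_nonneg _).trans hc)) hconv

lemma IntervalIntegrable.of_abs_le_of_mem_Ioo {u g : ℝ → ℝ} {a b : ℝ} (hab : a ≤ b)
    (hu : AEStronglyMeasurable u (volume.restrict (Ioo a b))) (hg : IntervalIntegrable g volume a b)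
    (hle : ∀ s ∈ Ioo a b, |u s| ≤ g s) : IntervalIntegrable u volume a b := by
  have hIoo : volume.restrict (uIoc a b) = volume.restrict (Ioo a b) := by
    rw [uIoc_of_le hab, Measure.restrict_congr_set Ioo_ae_eq_Ioc]
  refine hg.mono_fun' (hIoo ▸ hu) ?_
  rw [hIoo]
  filter_upwards [ae_restrict_mem measurableSet_Ioo] with s hs
  exact hle s hs

lemma le_mul_rpow_neg_of_rpow_mul_le {x y γ M : ℝ} (hx : 0 < x) (h : x ^ γ * y ≤ M) :
    y ≤ M * x ^ (-γ) := by
  rwa [rpow_neg hx.le, ← div_eq_mul_inv, le_div_iff₀ (rpow_pos_of_pos hx _), mul_comm]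

theorem mittagLeffler_solution_deriv_bound_general
    (lam β ε tj tj1 υ C_E M : ℝ)
    (hlam : 0 < lam) (hβ0 : 0 < β)
    (hε1 : ε < 1 - β) (ht : tj < tj1)
    (hCEββ : ∀ z : ℝ, 0 ≤ z → |mittagLeffler β β (-z)| ≤ C_E)
    (f f' : ℝ → ℝ)
    (hf' : IntervalIntegrable f' volume tj tj1)
    (hM : ∀ s ∈ Set.Ioo tj tj1, (s - tj) ^ (β + ε) * |f' s| ≤ M)
    (v' : ℝ → ℝ)
    (hv' : ∀ s ∈ Set.Ioo tj tj1,
      v' s = (f tj - lam * υ) * (s - tj) ^ (β - 1)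
          * mittagLeffler β β (-lam * (s - tj) ^ β)
        + ∫ r in tj..s, (s - r) ^ (β - 1)
            * mittagLeffler β β (-lam * (s - r) ^ β) * f' r) :
    (∀ s ∈ Set.Ioo tj tj1,
      |v' s| ≤ C_E * ((|f tj| + lam * |υ|) * (s - tj) ^ (β - 1)
        + M * betaFn (1 - β - ε) β * (s - tj) ^ (-ε))) ∧
    IntervalIntegrable v' volume tj tj1 := by
  set K := mittagLefflerKernel β lam
  have hv : ∀ s ∈ Ioo tj tj1,
      v' s = (f tj - lam * υ) * K (s - tj) + ∫ r in tj..s, K (s - r) * f' r := by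
    intro s hs
    simp only [hv' s hs, K, mittagLefflerKernel, mul_assoc]
  have hc : |f tj - lam * υ| ≤ |f tj| + lam * |υ| := by
    simpa [abs_mul, abs_of_pos hlam] using abs_sub (f tj) (lam * υ)
  have hf'_le : ∀ r ∈ Ioo tj tj1, |f' r| ≤ M * (r - tj) ^ (1 - β - ε - 1) := fun r hr => by
    rw [show 1 - β - ε - 1 = -(β + ε) by ring]
    exact le_mul_rpow_neg_of_rpow_mul_le (sub_pos.2 hr.1) (hM r hr)
  have hbound : ∀ s ∈ Ioo tj tj1, |v' s| ≤ C_E * ((|f tj| + lam * |υ|) * (s - tj) ^ (β - 1)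
      + M * betaFn (1 - β - ε) β * (s - tj) ^ (-ε)) := by
    intro s hs
    have h := abs_mul_add_integral_le hs.1 (by linarith) hβ0 hc
      (fun x hx => abs_mittagLefflerKernel_le hCEββ hlam.le hx.1.le)
      (fun r hr => hf'_le r ⟨hr.1, hr.2.trans hs.2⟩)
    rw [show 1 - β - ε + β - 1 = -ε by ring] at h
    rw [hv s hs]
    linarith
  have hformula : AEStronglyMeasurable
      (fun s => (f tj - lam * υ) * K (s - tj) + ∫ r in tj..s, K (s - r) * f' r)
      (volume.restrict (Ioc tj tj1)) :=
    (Measurable.aestronglyMeasurable (by fun_prop)).add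
      (aestronglyMeasurable_intervalIntegral_comp_sub_mul (by fun_prop) hf'.1.aestronglyMeasurable)
  refine ⟨hbound, IntervalIntegrable.of_abs_le_of_mem_Ioo ht.le ?_ ?_ hbound⟩
  · refine (hformula.mono_set Ioo_subset_Ioc_self).congr ?_
    filter_upwards [ae_restrict_mem measurableSet_Ioo] with s hs
    exact (hv s hs).symm
  · exact (((intervalIntegrable_sub_rpow (by linarith)).const_mul _).add
      ((intervalIntegrable_sub_rpow (by linarith)).const_mul _)).const_mul _

/-- Pointwise bound on the derivative of the Mittag–Leffler solution of the
constant-order fractional relaxation problem, and its `L¹` integrability. -/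
theorem mittagLeffler_solution_deriv_bound
    (lam β ε tj tj1 υ C_E M : ℝ)
    (hlam : 0 < lam) (hβ0 : 0 < β) (hβ1 : β < 1)
    (hε0 : 0 < ε) (hε1 : ε < 1 - β) (ht : tj < tj1)
    (hCEββ : ∀ z : ℝ, 0 ≤ z → |mittagLeffler β β (-z)| ≤ C_E)
    (hCEβ1 : ∀ z : ℝ, 0 ≤ z → |mittagLeffler β 1 (-z)| ≤ C_E)
    (f f' : ℝ → ℝ)
    (hf' : IntervalIntegrable f' volume tj tj1)
    (hf : ∀ x ∈ Set.Icc tj tj1, f x = f tj + ∫ s in tj..x, f' s)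
    (hM : ∀ s ∈ Set.Ioo tj tj1, (s - tj) ^ (β + ε) * |f' s| ≤ M)
    (v' : ℝ → ℝ)
    (hv' : ∀ s ∈ Set.Ioo tj tj1,
      v' s = (f tj - lam * υ) * (s - tj) ^ (β - 1)
          * mittagLeffler β β (-lam * (s - tj) ^ β)
        + ∫ r in tj..s, (s - r) ^ (β - 1)
            * mittagLeffler β β (-lam * (s - r) ^ β) * f' r) :
    (∀ s ∈ Set.Ioo tj tj1,
      |v' s| ≤ C_E * ((|f tj| + lam * |υ|) * (s - tj) ^ (β - 1)
        + M * betaFn (1 - β - ε) β * (s - tj) ^ (-ε))) ∧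
    IntervalIntegrable v' volume tj tj1 :=
  mittagLeffler_solution_deriv_bound_general lam β ε tj tj1 υ C_E M hlam hβ0 hε1 ht hCEββ f f' hf'
    hM v' hv'
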